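/- In the diffuse interface model for linear elasticity, the eigenvalues of the system matrix in any direction n are independent of the volume fraction α: they coincide with the eigenvalues ±√((λ+2μ)/ρ), ±√(μ/ρ) (with multiplicities) and 0 of the classical linear elasticity system, for every α ∈ (0,1]. -/

import Mathlib

set_option maxHeartbeats 1600000 in
/-- In the diffuse interface model for linear elasticity, the eigenvalues of the
system matrix A(α)·n in any unit direction n (acting on the state (σ, αv), with
the trivially-evolved material parameters contributing zero rows) are independent
of the volume fraction α ∈ (0,1]: the spectrum coincides with the eigenvalues
±√((λ+2μ)/ρ), ±√(μ/ρ) and 0 of the classical linear elasticity system. -/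
theorem diffuse_interface_eigenvalues_independent_of_alpha
    (lam mu rho : ℝ) (hlam : 0 < lam) (hmu : 0 < mu) (hrho : 0 < rho)
    (n : Fin 3 → ℝ) (hn : ∑ i, n i ^ 2 = 1)
    (A : ℝ → Matrix (Fin 3 × Fin 3 ⊕ Fin 3) (Fin 3 × Fin 3 ⊕ Fin 3) ℝ)
    (hA : ∀ α : ℝ, A α = Matrix.of fun r c =>
      match r, c with
      | Sum.inl (i, j), Sum.inr k =>
          -(1 / α) * (lam * (if i = j then n k else 0)
            + mu * (n i * (if j = k then 1 else 0) + n j * (if i = k then 1 else 0)))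
      | Sum.inr i, Sum.inl (k, l) => -(α / rho) * (if i = k then n l else 0)
      | _, _ => 0) :
    ∀ α ∈ Set.Ioc (0:ℝ) 1,
      spectrum ℝ (A α) =
        {0, Real.sqrt ((lam + 2 * mu) / rho), -Real.sqrt ((lam + 2 * mu) / rho),
          Real.sqrt (mu / rho), -Real.sqrt (mu / rho)} := by
  rintro α ⟨hα0, -⟩
  have hαne : α ≠ 0 := ne_of_gt hα0
  have hrne : rho ≠ 0 := ne_of_gt hrho
  have hc1 : (0:ℝ) < (lam + 2*mu)/rho := by positivity
  have hc2 : (0:ℝ) < mu/rho := by positivity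
  have hn3 : n 0 ^ 2 + n 1 ^ 2 + n 2 ^ 2 = 1 := by
    simpa [Fin.sum_univ_three] using hn
  have hrow1 : ∀ (v : (Fin 3 × Fin 3 ⊕ Fin 3) → ℝ) (i j : Fin 3),
      ∑ c, A α (Sum.inl (i,j)) c * v c =
        -(1/α) * (lam * (if i = j then (1:ℝ) else 0) * (∑ k, n k * v (Sum.inr k))
          + mu * (n i * v (Sum.inr j) + n j * v (Sum.inr i))) := by
    intro v i j
    rw [hA, Fintype.sum_sum_type]
    fin_cases i <;> fin_cases j <;>
      simp [Fintype.sum_prod_type, Fin.sum_univ_three] <;> ring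
  have hrow2 : ∀ (v : (Fin 3 × Fin 3 ⊕ Fin 3) → ℝ) (i : Fin 3),
      ∑ c, A α (Sum.inr i) c * v c = -(α/rho) * ∑ l, n l * v (Sum.inl (i, l)) := by
    intro v i
    rw [hA, Fintype.sum_sum_type]
    fin_cases i <;>
      simp [Fintype.sum_prod_type, Fin.sum_univ_three] <;> ring
  have hker : ∀ x : ℝ, x ∈ spectrum ℝ (A α) ↔
      ∃ w : (Fin 3 × Fin 3 ⊕ Fin 3) → ℝ, w ≠ 0 ∧
        ∀ r, x * w r - ∑ c, A α r c * w c = 0 := by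
    intro x
    rw [spectrum.mem_iff, Matrix.isUnit_iff_isUnit_det, isUnit_iff_ne_zero, not_not,
      ← Matrix.exists_mulVec_eq_zero_iff]
    have hmv : ∀ w : (Fin 3 × Fin 3 ⊕ Fin 3) → ℝ, ∀ r,
        ((algebraMap ℝ (Matrix (Fin 3 × Fin 3 ⊕ Fin 3) (Fin 3 × Fin 3 ⊕ Fin 3) ℝ) x
          - A α).mulVec w) r = x * w r - ∑ c, A α r c * w c := by
      intro w r
      rw [Matrix.sub_mulVec, Algebra.algebraMap_eq_smul_one, Matrix.smul_mulVec,
        Matrix.one_mulVec]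
      simp [Matrix.mulVec, dotProduct]
    constructor
    · rintro ⟨w, hw, h⟩
      exact ⟨w, hw, fun r => by rw [← hmv w r]; exact congrFun h r⟩
    · rintro ⟨w, hw, h⟩
      exact ⟨w, hw, funext fun r => by rw [hmv w r]; exact h r⟩
  -- perpendicular vector
  obtain ⟨d, hdn, hd⟩ : ∃ d : Fin 3 → ℝ, (∑ l, n l * d l) = 0 ∧ d ≠ 0 := by
    by_cases h01 : n 0 = 0 ∧ n 1 = 0
    · refine ⟨![1,0,0], by simp [Fin.sum_univ_three, h01.1], ?_⟩
      intro h; have := congrFun h 0; simp at this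
    · refine ⟨![n 1, -(n 0), 0], by simp [Fin.sum_univ_three]; ring, ?_⟩
      intro h
      exact h01 ⟨by simpa using congrFun h 1, by simpa using congrFun h 0⟩
  -- builder for nonzero eigenvalues
  have build : ∀ x : ℝ, x ≠ 0 → ∀ u : Fin 3 → ℝ, u ≠ 0 →
      (∀ i, rho * (x^2 * u i) = (lam+mu) * n i * (∑ k, n k * u k) + mu * u i) →
      ∃ w : (Fin 3 × Fin 3 ⊕ Fin 3) → ℝ, w ≠ 0 ∧ ∀ r, x * w r - ∑ c, A α r c * w c = 0 := by
    intro x hx u hu hrel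
    refine ⟨Sum.elim (fun p : Fin 3 × Fin 3 => -(1/(x*α)) * (lam * (if p.1 = p.2 then (1:ℝ) else 0)
        * (∑ k, n k * u k) + mu * (n p.1 * u p.2 + n p.2 * u p.1))) u, ?_, ?_⟩
    · intro h0
      exact hu (funext fun i => by simpa using congrFun h0 (Sum.inr i))
    · rintro (⟨i,j⟩|i)
    -- inl rows
      · rw [hrow1]
        simp only [Sum.elim_inl, Sum.elim_inr]
        rcases eq_or_ne i j with h | h <;> simp only [h, if_pos rfl, if_neg, ne_eq] <;>
          field_simp <;> ring
      · rw [hrow2]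
        simp only [Sum.elim_inl, Sum.elim_inr]
        have hS : ∑ l, n l * (-(1/(x*α)) * (lam * (if i = l then (1:ℝ) else 0)
              * (∑ k, n k * u k) + mu * (n i * u l + n l * u i)))
            = -(1/(x*α)) * ((lam + mu) * n i * (∑ k, n k * u k) + mu * u i) := by
          fin_cases i <;> simp [Fin.sum_univ_three]
          · linear_combination (-(1/(x*α)) * mu * u 0) * hn3
          · linear_combination (-(1/(x*α)) * mu * u 1) * hn3
          · linear_combination (-(1/(x*α)) * mu * u 2) * hn3
        rw [hS, ← hrel i]
        field_simp
        ring
  -- builder for eigenvalue 0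
  have build0 : ∃ w : (Fin 3 × Fin 3 ⊕ Fin 3) → ℝ, w ≠ 0 ∧
      ∀ r, (0:ℝ) * w r - ∑ c, A α r c * w c = 0 := by
    obtain ⟨i0, hi0⟩ := Function.ne_iff.mp hd
    refine ⟨Sum.elim (fun p : Fin 3 × Fin 3 => d p.1 * d p.2) 0, ?_, ?_⟩
    · intro h0
      have := congrFun h0 (Sum.inl (i0, i0))
      simp only [Sum.elim_inl, Pi.zero_apply] at this
      exact hi0 (by simpa using mul_self_eq_zero.mp this)
    · rintro (⟨i,j⟩|i)
      · rw [hrow1]; simp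
      · rw [hrow2]
        simp only [Sum.elim_inl, Sum.elim_inr, Pi.zero_apply]
        have : ∑ l, n l * (d i * d l) = d i * ∑ l, n l * d l := by
          rw [Finset.mul_sum]; apply Finset.sum_congr rfl; intros; ring
        rw [this, hdn]
        ring
  -- forward direction
  have fwd : ∀ x : ℝ,
      (∃ w : (Fin 3 × Fin 3 ⊕ Fin 3) → ℝ, w ≠ 0 ∧
        ∀ r, x * w r - ∑ c, A α r c * w c = 0) →
      x = 0 ∨ x^2 = (lam + 2*mu)/rho ∨ x^2 = mu/rho := by
    rintro x ⟨w, hw, h⟩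
    by_cases hx : x = 0
    · exact Or.inl hx
    right
    set u : Fin 3 → ℝ := fun i => w (Sum.inr i) with hu
    set s : Fin 3 → Fin 3 → ℝ := fun i j => w (Sum.inl (i,j)) with hs
    have E : ∀ i j, α * (x * s i j) = -(lam * (if i = j then (1:ℝ) else 0)
        * (∑ k, n k * u k) + mu * (n i * u j + n j * u i)) := by
      intro i j
      have h1 := h (Sum.inl (i,j))
      rw [hrow1] at h1
      have h2 : x * s i j = -(1/α) * (lam * (if i = j then (1:ℝ) else 0)
          * (∑ k, n k * u k) + mu * (n i * u j + n j * u i)) := by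
        linarith [h1]
      rw [h2]
      field_simp
    have F : ∀ i, rho * (x * u i) = -α * ∑ l, n l * s i l := by
      intro i
      have h1 := h (Sum.inr i)
      rw [hrow2] at h1
      have h2 : x * u i = -(α/rho) * ∑ l, n l * s i l := by linarith [h1]
      rw [h2]
      field_simp
    have hune : u ≠ 0 := by
      intro h0
      apply hw
      funext r
      have hu0 : ∀ k, u k = 0 := fun k => congrFun h0 k
      rcases r with ⟨i,j⟩ | i
      · have hE := E i j
        simp only [hu0, mul_zero, zero_mul, add_zero, mul_add] at hE
        have : α * (x * s i j) = 0 := by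
          rw [hE]
          have : ∑ k, n k * u k = 0 := by simp [hu0]
          simp [this]
        have := mul_eq_zero.mp this
        rcases this with h' | h'
        · exact absurd h' hαne
        · rcases mul_eq_zero.mp h' with h'' | h''
          · exact absurd h'' hx
          · exact h''
      · exact hu0 i
    have R : ∀ i, rho * (x^2 * u i) = (lam + mu) * n i * (∑ k, n k * u k) + mu * u i := by
      intro i
      fin_cases i
      · show rho * (x^2 * u 0) = (lam + mu) * n 0 * (∑ k, n k * u k) + mu * u 0
        have hF := F 0
        have e0 := E 0 0; have e1 := E 0 1; have e2 := E 0 2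
        simp only [Fin.sum_univ_three] at hF e0 e1 e2 ⊢
        norm_num [Fin.ext_iff] at e0 e1 e2
        linear_combination x * hF - n 0 * e0 - n 1 * e1 - n 2 * e2 + mu * (u 0) * hn3
      · show rho * (x^2 * u 1) = (lam + mu) * n 1 * (∑ k, n k * u k) + mu * u 1
        have hF := F 1
        have e0 := E 1 0; have e1 := E 1 1; have e2 := E 1 2
        simp only [Fin.sum_univ_three] at hF e0 e1 e2 ⊢
        norm_num [Fin.ext_iff] at e0 e1 e2
        linear_combination x * hF - n 0 * e0 - n 1 * e1 - n 2 * e2 + mu * (u 1) * hn3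
      · show rho * (x^2 * u 2) = (lam + mu) * n 2 * (∑ k, n k * u k) + mu * u 2
        have hF := F 2
        have e0 := E 2 0; have e1 := E 2 1; have e2 := E 2 2
        simp only [Fin.sum_univ_three] at hF e0 e1 e2 ⊢
        norm_num [Fin.ext_iff] at e0 e1 e2
        linear_combination x * hF - n 0 * e0 - n 1 * e1 - n 2 * e2 + mu * (u 2) * hn3
    have hD2 : rho * (x^2 * (∑ k, n k * u k)) = (lam + 2*mu) * (∑ k, n k * u k) := by
      have r0 := R 0; have r1 := R 1; have r2 := R 2
      simp only [Fin.sum_univ_three] at r0 r1 r2 ⊢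
      linear_combination n 0 * r0 + n 1 * r1 + n 2 * r2
        + ((lam + mu) * (n 0 * u 0 + n 1 * u 1 + n 2 * u 2)) * hn3
    by_cases hDz : (∑ k, n k * u k) = 0
    · right
      obtain ⟨i, hi⟩ := Function.ne_iff.mp hune
      have hui : u i ≠ 0 := by simpa using hi
      have ri := R i
      rw [hDz] at ri
      have h1 : (rho * x^2 - mu) * u i = 0 := by linear_combination ri
      rcases mul_eq_zero.mp h1 with h2 | h2
      · rw [eq_div_iff hrne]; linarith
      · exact absurd h2 hui
    · left
      have h1 : (rho * x^2 - (lam + 2*mu)) * (∑ k, n k * u k) = 0 := by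
        linear_combination hD2
      rcases mul_eq_zero.mp h1 with h2 | h2
      · rw [eq_div_iff hrne]; linarith
      · exact absurd h2 hDz
  -- assembly
  have hnn : (∑ k, n k * n k) = 1 := by
    rw [← hn]; exact Finset.sum_congr rfl fun _ _ => (sq (n _)).symm
  have hnne : n ≠ 0 := by
    intro h0; rw [h0] at hn3; norm_num at hn3
  have hs1 : Real.sqrt ((lam + 2*mu)/rho) ^ 2 = (lam + 2*mu)/rho := Real.sq_sqrt hc1.le
  have hs2 : Real.sqrt (mu/rho) ^ 2 = mu/rho := Real.sq_sqrt hc2.le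
  have hs1ne : Real.sqrt ((lam + 2*mu)/rho) ≠ 0 := ne_of_gt (Real.sqrt_pos.mpr hc1)
  have hs2ne : Real.sqrt (mu/rho) ≠ 0 := ne_of_gt (Real.sqrt_pos.mpr hc2)
  ext x
  simp only [Set.mem_insert_iff, Set.mem_singleton_iff, hker]
  constructor
  · intro h
    rcases fwd x h with rfl | h1 | h1
    · exact Or.inl rfl
    · rcases sq_eq_sq_iff_eq_or_eq_neg.mp (h1.trans hs1.symm) with rfl | rfl
      · exact Or.inr (Or.inl rfl)
      · exact Or.inr (Or.inr (Or.inl rfl))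
    · rcases sq_eq_sq_iff_eq_or_eq_neg.mp (h1.trans hs2.symm) with rfl | rfl
      · exact Or.inr (Or.inr (Or.inr (Or.inl rfl)))
      · exact Or.inr (Or.inr (Or.inr (Or.inr rfl)))
  · rintro (rfl | rfl | rfl | rfl | rfl)
    · exact build0
    · refine build _ hs1ne n hnne fun i => ?_
      rw [hs1, hnn]
      field_simp
      ring
    · refine build _ (neg_ne_zero.mpr hs1ne) n hnne fun i => ?_
      rw [neg_sq, hs1, hnn]
      field_simp
      ring
    · refine build _ hs2ne d hd fun i => ?_
      rw [hs2, hdn]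
      field_simp
      ring
    · refine build _ (neg_ne_zero.mpr hs2ne) d hd fun i => ?_
      rw [neg_sq, hs2, hdn]
      field_simp
      ring
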